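/- arXiv:2009.03395 — 4 statements merged into one kernel-verified Lean document; each statement's English description precedes it below -/
import Mathlib

section
/- For all real numbers r ≥ 0, s ≥ 1, and τ with 0 < τ < 1, we have log(1 + r/s) ≤ ((1+r)^τ / s^τ) · log(1 + r). -/
/-! With `a = (1 + r) / s`, the left side is at most `log (1 + r)` (as `s ≥ 1`) and at most
`r / s ≤ a * log (1 + r)` (from `log x ≤ x - 1` and `x - 1 ≤ x log x`), hence at most
`min 1 a * log (1 + r)`; and `min 1 a ≤ a ^ τ` for `0 ≤ τ ≤ 1`. -/

namespace Real

lemma min_one_le_rpow {a τ : ℝ} (ha : 0 ≤ a) (hτ0 : 0 ≤ τ) (hτ1 : τ ≤ 1) :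
    min 1 a ≤ a ^ τ := by
  rcases le_total a 1 with ha1 | ha1
  · exact (min_le_right 1 a).trans (self_le_rpow_of_le_one ha ha1 hτ1)
  · exact (min_le_left 1 a).trans (one_le_rpow ha1 hτ0)

lemma log_one_add_div_le_div_mul_log {r s : ℝ} (hr : 0 ≤ r) (hs : 0 < s) :
    log (1 + r / s) ≤ (1 + r) / s * log (1 + r) := by
  calc log (1 + r / s) ≤ r / s := by
        linarith [log_le_sub_one_of_pos (x := 1 + r / s) (by positivity)]
    _ ≤ (1 + r) * log (1 + r) / s := by
        gcongr
        linarith [self_sub_one_le_mul_log (x := 1 + r) (by linarith)]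
    _ = (1 + r) / s * log (1 + r) := div_mul_eq_mul_div _ _ _ |>.symm

lemma log_one_add_div_le_log_one_add {r s : ℝ} (hr : 0 ≤ r) (hs : 1 ≤ s) :
    log (1 + r / s) ≤ log (1 + r) := by
  gcongr
  exact div_le_self hr hs

end Real

theorem log_one_add_div_le_of_one_le (r s τ : ℝ) (hr : 0 ≤ r) (hs : 1 ≤ s)
    (hτ0 : 0 < τ) (hτ1 : τ < 1) :
    Real.log (1 + r / s) ≤ ((1 + r) ^ τ / s ^ τ) * Real.log (1 + r) := by
  have hs0 : 0 < s := by linarith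
  have hlog : 0 ≤ Real.log (1 + r) := Real.log_nonneg (by linarith)
  rw [← Real.div_rpow (by linarith) hs0.le]
  calc Real.log (1 + r / s)
      ≤ min (Real.log (1 + r)) ((1 + r) / s * Real.log (1 + r)) :=
        le_min (Real.log_one_add_div_le_log_one_add hr hs)
          (Real.log_one_add_div_le_div_mul_log hr hs0)
    _ = min 1 ((1 + r) / s) * Real.log (1 + r) := by rw [min_mul_of_nonneg _ _ hlog, one_mul]
    _ ≤ ((1 + r) / s) ^ τ * Real.log (1 + r) := by
        gcongr
        exact Real.min_one_le_rpow (by positivity) hτ0.le hτ1.le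
end

section
/- Let ν ≥ √3 − 2 be real. Define f : ℝ → ℝ by f(t) = t − t²/(2(ν+2)) + t³/(6(ν+2)(ν+3)). Then f is monotone nondecreasing on ℝ, and for all t ≤ 2(ν+2), f(t) ≤ 4(ν+2)²/(3(ν+3)). -/
/-! With `a = ν + 2` and `b = ν + 3`, the difference quotient of
`f t = t - t² / (2a) + t³ / (6ab)` is, up to the factor `6ab > 0`,
`x² + xy + y² - 3b(x + y) + 6ab = ¾(x + y - 2b)² + ¼(x - y)² + 3b(2a - b)`,
which is nonnegative as soon as `0 ≤ b ≤ 2a`; for our `a, b` this means `ν ≥ -1`.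
The bound is then `f t ≤ f (2a) = 4a² / (3b)`. -/

lemma cubic_sub_cubic {a b : ℝ} (ha : a ≠ 0) (hb : b ≠ 0) (x y : ℝ) :
    (y - y ^ 2 / (2 * a) + y ^ 3 / (6 * a * b)) - (x - x ^ 2 / (2 * a) + x ^ 3 / (6 * a * b)) =
      (y - x) * (x ^ 2 + x * y + y ^ 2 - 3 * b * (x + y) + 6 * a * b) / (6 * a * b) := by
  field_simp
  ring

lemma cubic_difference_quotient_nonneg {a b : ℝ} (hb : 0 ≤ b) (hba : b ≤ 2 * a) (x y : ℝ) :
    0 ≤ x ^ 2 + x * y + y ^ 2 - 3 * b * (x + y) + 6 * a * b := by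
  nlinarith [sq_nonneg (x + y - 2 * b), sq_nonneg (x - y), mul_nonneg hb (sub_nonneg.2 hba)]

theorem monotone_cubic {a b : ℝ} (ha : 0 < a) (hb : 0 < b) (hba : b ≤ 2 * a) :
    Monotone fun t : ℝ => t - t ^ 2 / (2 * a) + t ^ 3 / (6 * a * b) := by
  intro x y hxy
  have hdiff := cubic_sub_cubic ha.ne' hb.ne' x y
  have : 0 ≤ (y - x) * (x ^ 2 + x * y + y ^ 2 - 3 * b * (x + y) + 6 * a * b) / (6 * a * b) :=
    div_nonneg (mul_nonneg (sub_nonneg.2 hxy) (cubic_difference_quotient_nonneg hb.le hba x y))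
      (by positivity)
  simp only
  linarith

lemma cubic_two_mul {a b : ℝ} (ha : a ≠ 0) (hb : b ≠ 0) :
    2 * a - (2 * a) ^ 2 / (2 * a) + (2 * a) ^ 3 / (6 * a * b) = 4 * a ^ 2 / (3 * b) := by
  field_simp
  ring

theorem monotone_and_bound_cubic (ν : ℝ) (hν : Real.sqrt 3 - 2 ≤ ν) :
    Monotone (fun t : ℝ => t - t ^ 2 / (2 * (ν + 2)) + t ^ 3 / (6 * (ν + 2) * (ν + 3))) ∧
      ∀ t : ℝ, t ≤ 2 * (ν + 2) →
        t - t ^ 2 / (2 * (ν + 2)) + t ^ 3 / (6 * (ν + 2) * (ν + 3)) ≤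
          4 * (ν + 2) ^ 2 / (3 * (ν + 3)) := by
  have hν' : -1 ≤ ν := by
    have : (1 : ℝ) ≤ Real.sqrt 3 := Real.one_le_sqrt.2 (by norm_num)
    linarith
  have ha : 0 < ν + 2 := by linarith
  have hb : 0 < ν + 3 := by linarith
  have hmono := monotone_cubic ha hb (by linarith)
  refine ⟨hmono, fun t ht => ?_⟩
  rw [← cubic_two_mul ha.ne' hb.ne']
  exact hmono ht
end

section
/- Let ν ≥ √3 − 2 and 0 ≤ x ≤ 2√(2(ν+2)). Then the Bessel function of the first kind satisfies |J_ν(x)| ≤ x^ν / (2^ν Γ(ν+1)). -/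
noncomputable def besselJ (ν x : ℝ) : ℝ :=
  (x / 2) ^ ν *
    ∑' m : ℕ, (-1 : ℝ) ^ m / (m.factorial * Real.Gamma (m + ν + 1)) * (x / 2) ^ (2 * m)

/-!
With `u = (x/2)²` we have `J_ν(x) = (x/2)^ν · Σ (-1)^m t_m` where `t_m = u^m / (m! Γ(m+ν+1))`,
and `t_{m+1} = u / ((m+1)(m+ν+1)) · t_m`. The bound `u ≤ 2(ν+2)` makes `t_1 ≥ t_2 ≥ ⋯`, so the
alternating series test squeezes the sum between `t_0 - t_1 + t_2 - t_3` and `t_0`. For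
`ν ≥ √3 - 2` the four-term partial sum is at least `-t_0` (a cubic inequality in `u`), hence the
sum has absolute value at most `t_0 = 1 / Γ(ν+1)`.
-/

theorem Real.pow_mul_Gamma_le_Gamma_add_nat {a : ℝ} (ha : 0 < a) (m : ℕ) :
    a ^ m * Real.Gamma a ≤ Real.Gamma (a + m) := by
  induction m with
  | zero => simp
  | succ n ih =>
    have han : 0 < a + n := by positivity
    calc a ^ (n + 1) * Real.Gamma a = a * (a ^ n * Real.Gamma a) := by ring
      _ ≤ (a + n) * Real.Gamma (a + n) := by gcongr; linarith [n.cast_nonneg (α := ℝ)]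
      _ = Real.Gamma (a + (n + 1 : ℕ)) := by
        rw [Nat.cast_succ, ← add_assoc, Real.Gamma_add_one han.ne']

theorem tsum_alternating_bounds_of_antitone_succ {E : Type*} [Ring E] [PartialOrder E]
    [IsOrderedRing E] [UniformSpace E] [IsUniformAddGroup E] [CompleteSpace E]
    [OrderClosedTopology E] {f : ℕ → E} (hf : Summable f) (hfa : Antitone fun n => f (n + 1)) :
    f 0 - f 1 + f 2 - f 3 ≤ ∑' n, (-1) ^ n * f n ∧ ∑' n, (-1) ^ n * f n ≤ f 0 := by
  have hlim := ((summable_nat_add_iff 1).2 hf).tendsto_alternating_series_tsum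
  have hlower : ∑' n, (-1) ^ n * f (n + 1) ≤ f 1 - f 2 + f 3 := by
    simpa [Finset.sum_range_succ, sub_eq_add_neg] using hfa.tendsto_le_alternating_series hlim 1
  have hupper : 0 ≤ ∑' n, (-1) ^ n * f (n + 1) := by
    simpa using hfa.alternating_series_le_tendsto hlim 0
  have hsplit : ∑' n, (-1) ^ n * f n = f 0 - ∑' n, (-1) ^ n * f (n + 1) := by
    simp [hf.alternating.tsum_eq_zero_add, pow_succ, tsum_neg, sub_eq_add_neg]
  rw [hsplit]
  constructor
  · calc f 0 - f 1 + f 2 - f 3 = f 0 - (f 1 - f 2 + f 3) := by abel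
      _ ≤ _ := sub_le_sub_left hlower _
  · exact sub_le_self _ hupper

noncomputable def besselTerm (ν u : ℝ) (m : ℕ) : ℝ :=
  u ^ m / (m.factorial * Real.Gamma (m + ν + 1))

theorem besselJ_eq_tsum_besselTerm (ν x : ℝ) :
    besselJ ν x = (x / 2) ^ ν * ∑' m : ℕ, (-1) ^ m * besselTerm ν ((x / 2) ^ 2) m := by
  simp only [besselJ, besselTerm, pow_mul]
  congr 1
  exact tsum_congr fun m => by ring

section besselTerm

variable {ν u : ℝ}

theorem besselTerm_zero : besselTerm ν u 0 = 1 / Real.Gamma (ν + 1) := by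
  simp [besselTerm]

theorem besselTerm_nonneg (hν : -1 < ν) (hu : 0 ≤ u) (m : ℕ) : 0 ≤ besselTerm ν u m := by
  have : 0 < (m : ℝ) + ν + 1 := by linarith [m.cast_nonneg (α := ℝ)]
  unfold besselTerm
  positivity

theorem besselTerm_succ (hν : -1 < ν) (m : ℕ) :
    besselTerm ν u (m + 1) = u / ((m + 1) * (m + ν + 1)) * besselTerm ν u m := by
  have hm : 0 < (m : ℝ) + ν + 1 := by linarith [m.cast_nonneg (α := ℝ)]
  have hΓ : Real.Gamma ((m + 1 : ℕ) + ν + 1) = (m + ν + 1) * Real.Gamma (m + ν + 1) := by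
    rw [← Real.Gamma_add_one hm.ne']
    push_cast
    ring_nf
  unfold besselTerm
  rw [hΓ, Nat.factorial_succ, pow_succ]
  push_cast
  field_simp

theorem summable_besselTerm (hν : -1 < ν) (hu : 0 ≤ u) : Summable (besselTerm ν u) := by
  have ha : 0 < ν + 1 := by linarith
  refine Summable.of_nonneg_of_le (besselTerm_nonneg hν hu) (fun m => ?_)
    ((Real.summable_pow_div_factorial (u / (ν + 1))).div_const (Real.Gamma (ν + 1)))
  have hΓ := Real.pow_mul_Gamma_le_Gamma_add_nat ha m
  rw [show ν + 1 + (m : ℝ) = m + ν + 1 by ring] at hΓ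
  unfold besselTerm
  rw [div_pow, div_div, div_div]
  refine div_le_div_of_nonneg_left (by positivity)
    (mul_pos (pow_pos ha m) (mul_pos (by positivity) (Real.Gamma_pos_of_pos ha))) ?_
  calc (ν + 1) ^ m * (m.factorial * Real.Gamma (ν + 1))
      = m.factorial * ((ν + 1) ^ m * Real.Gamma (ν + 1)) := by ring
    _ ≤ m.factorial * Real.Gamma (m + ν + 1) := by gcongr

theorem antitone_besselTerm_succ (hν : -1 < ν) (hu : 0 ≤ u) (hu' : u ≤ 2 * (ν + 2)) :
    Antitone fun m => besselTerm ν u (m + 1) := by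
  refine antitone_nat_of_succ_le fun m => ?_
  have hm : (0 : ℝ) ≤ m := m.cast_nonneg
  have hratio : u / ((↑(m + 1) + 1) * (↑(m + 1) + ν + 1)) ≤ 1 := by
    push_cast
    rw [div_le_one (by apply mul_pos <;> linarith)]
    nlinarith
  rw [besselTerm_succ hν]
  exact mul_le_of_le_one_left (besselTerm_nonneg hν hu _) hratio

theorem neg_besselTerm_zero_le (hν : -1 < ν) (hν' : 3 ≤ (ν + 2) ^ 2) (hu : 0 ≤ u)
    (hu' : u ≤ 2 * (ν + 2)) :
    -besselTerm ν u 0 ≤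
      besselTerm ν u 0 - besselTerm ν u 1 + besselTerm ν u 2 - besselTerm ν u 3 := by
  have hν1 : 0 < ν + 1 := by linarith
  have hν2 : 0 < ν + 2 := by linarith
  have hν3 : 0 < ν + 3 := by linarith
  have ht1 : besselTerm ν u 1 = u / (ν + 1) * besselTerm ν u 0 := by
    simpa using besselTerm_succ (u := u) hν 0
  have ht2 : besselTerm ν u 2 = u / (2 * (ν + 2)) * besselTerm ν u 1 := by
    rw [besselTerm_succ hν 1]; congr 2; push_cast; ring
  have ht3 : besselTerm ν u 3 = u / (3 * (ν + 3)) * besselTerm ν u 2 := by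
    rw [besselTerm_succ hν 2]; congr 2; push_cast; ring
  set P := 12 * (ν + 1) * (ν + 2) * (ν + 3) - 6 * (ν + 2) * (ν + 3) * u
    + 3 * (ν + 3) * u ^ 2 - u ^ 3
  have hsum : besselTerm ν u 0 - besselTerm ν u 1 + besselTerm ν u 2 - besselTerm ν u 3
      + besselTerm ν u 0 = besselTerm ν u 0 * (P / (6 * (ν + 1) * (ν + 2) * (ν + 3))) := by
    rw [ht3, ht2, ht1]
    field_simp
    ring
  have hP : 0 ≤ P := by
    have hQ : 0 ≤ (2 * u - ν - 5) ^ 2 + 3 * (ν + 1) * (5 * ν + 13) :=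
      add_nonneg (sq_nonneg _) (mul_nonneg (by positivity) (by linarith))
    have h4P : 4 * P = (2 * (ν + 2) - u) * ((2 * u - ν - 5) ^ 2 + 3 * (ν + 1) * (5 * ν + 13))
        + 16 * ((ν + 2) * ((ν + 2) ^ 2 - 3)) := by ring
    linarith [mul_nonneg (sub_nonneg.2 hu') hQ, mul_nonneg hν2.le (sub_nonneg.2 hν')]
  have hden : 0 < 6 * (ν + 1) * (ν + 2) * (ν + 3) := by positivity
  have := mul_nonneg (besselTerm_nonneg hν hu 0) (div_nonneg hP hden.le)
  linarith

theorem abs_tsum_besselTerm_le (hν : √3 - 2 ≤ ν) (hu : 0 ≤ u) (hu' : u ≤ 2 * (ν + 2)) :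
    |∑' m : ℕ, (-1) ^ m * besselTerm ν u m| ≤ 1 / Real.Gamma (ν + 1) := by
  have hν1 : -1 < ν := by linarith [(Real.lt_sqrt zero_le_one).2 (by norm_num : (1 : ℝ) ^ 2 < 3)]
  have hν2 : 3 ≤ (ν + 2) ^ 2 := by
    nlinarith [Real.sq_sqrt (show (0 : ℝ) ≤ 3 by norm_num), Real.sqrt_nonneg 3]
  obtain ⟨hlower, hupper⟩ := tsum_alternating_bounds_of_antitone_succ
    (summable_besselTerm hν1 hu) (antitone_besselTerm_succ hν1 hu hu')
  rw [← besselTerm_zero (u := u), abs_le]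
  exact ⟨(neg_besselTerm_zero_le hν1 hν2 hu hu').trans hlower, hupper⟩

end besselTerm

theorem besselJ_bound (ν x : ℝ) (hν : Real.sqrt 3 - 2 ≤ ν)
    (hx0 : 0 ≤ x) (hx : x ≤ 2 * Real.sqrt (2 * (ν + 2))) :
    |besselJ ν x| ≤ x ^ ν / (2 ^ ν * Real.Gamma (ν + 1)) := by
  have hx2 : 0 ≤ x / 2 := by positivity
  have hu : (x / 2) ^ 2 ≤ 2 * (ν + 2) :=
    (Real.le_sqrt hx2 (by linarith [Real.sqrt_nonneg 3])).1 (by linarith)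
  calc |besselJ ν x| = (x / 2) ^ ν * |∑' m : ℕ, (-1) ^ m * besselTerm ν ((x / 2) ^ 2) m| := by
        rw [besselJ_eq_tsum_besselTerm, abs_mul, abs_of_nonneg (Real.rpow_nonneg hx2 ν)]
    _ ≤ (x / 2) ^ ν * (1 / Real.Gamma (ν + 1)) := by
        gcongr
        exact abs_tsum_besselTerm_le hν (sq_nonneg _) hu
    _ = x ^ ν / (2 ^ ν * Real.Gamma (ν + 1)) := by
        rw [Real.div_rpow hx0 zero_le_two]
        ring
end

section
/- Suppose (λ_k) is a sequence of reals and there are constants A > 0, d ≥ 1 such that e^{−dλ} Σ_k (λ − λ_k)₊ → A as λ → ∞. Then e^{−dλ} · #{k : λ_k < λ} → d·A as λ → ∞. -/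
/-!
The Riesz mean `R(l) = ∑ₖ (l - λₖ)₊` is convex, with the counting function `N(l)` as a
subgradient: `R(l) + s N(l) ≤ R(l + s)` for every real `s`. Dividing by `s > 0` and by `s < 0`
squeezes `e^{-dl} N(l)` between difference quotients `e^{-dl} (R(l + s) - R(l)) / s`, whose limits
`(e^{ds} - 1) A / s` tend to `d A` as `s → 0`.
-/

open Filter Topology

lemma max_sub_zero_add_mul_ite_le (x l s : ℝ) :
    max (l - x) 0 + s * (if x < l then 1 else 0) ≤ max (l + s - x) 0 := by
  split_ifs with hx
  · rw [max_eq_left (by linarith)]; linarith [le_max_left (l + s - x) 0]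
  · rw [max_eq_right (by linarith)]; simp

section Riesz

variable {ι : Type*} {lam : ι → ℝ}

lemma tsum_max_sub_eq_sum {F : Finset ι} {l : ℝ} (hF : ∀ k, lam k < l → k ∈ F) :
    ∑' k, max (l - lam k) 0 = ∑ k ∈ F, max (l - lam k) 0 :=
  tsum_eq_sum fun k hk => max_eq_right (by linarith [not_lt.1 (mt (hF k) hk)])

lemma natCard_lt_eq_sum_ite {F : Finset ι} {l : ℝ} (hF : ∀ k, lam k < l → k ∈ F) :
    (Nat.card {k | lam k < l} : ℝ) = ∑ k ∈ F, if lam k < l then 1 else 0 := by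
  have hset : {k | lam k < l} = ↑(F.filter fun k => lam k < l) := by
    ext k; simpa using hF k
  rw [Finset.sum_boole, hset, Nat.card_coe_set_eq, Set.ncard_coe_finset]

lemma tsum_max_sub_add_mul_natCard_le (hfin : ∀ l, {k | lam k < l}.Finite) (l s : ℝ) :
    ∑' k, max (l - lam k) 0 + s * Nat.card {k | lam k < l} ≤
      ∑' k, max (l + s - lam k) 0 := by
  set F := (hfin (max l (l + s))).toFinset
  have hF : ∀ m ≤ max l (l + s), ∀ k, lam k < m → k ∈ F := fun m hm k hk =>
    (hfin _).mem_toFinset.2 (lt_of_lt_of_le hk hm)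
  rw [tsum_max_sub_eq_sum (hF l (le_max_left _ _)), tsum_max_sub_eq_sum (hF _ (le_max_right _ _)),
    natCard_lt_eq_sum_ite (hF l (le_max_left _ _)), Finset.mul_sum, ← Finset.sum_add_distrib]
  exact Finset.sum_le_sum fun k _ => max_sub_zero_add_mul_ite_le (lam k) l s

end Riesz

lemma tendsto_exp_mul_sub_one_div (d : ℝ) :
    Tendsto (fun s => (Real.exp (d * s) - 1) / s) (𝓝[≠] 0) (𝓝 d) := by
  have hderiv : HasDerivAt (fun s => Real.exp (d * s)) d 0 := by
    simpa using ((hasDerivAt_id (0 : ℝ)).const_mul d).exp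
  refine hderiv.tendsto_slope_zero.congr fun s => ?_
  simp [div_eq_inv_mul]

section Tauberian

variable {R N : ℝ → ℝ} {d A : ℝ}

lemma tendsto_exp_neg_mul_mul_slope
    (h : Tendsto (fun l => Real.exp (-d * l) * R l) atTop (𝓝 A)) (s : ℝ) :
    Tendsto (fun l => Real.exp (-d * l) * ((R (l + s) - R l) / s)) atTop
      (𝓝 ((Real.exp (d * s) - 1) / s * A)) := by
  have hshift : Tendsto (fun l => Real.exp (d * s) * (Real.exp (-d * (l + s)) * R (l + s)))
      atTop (𝓝 (Real.exp (d * s) * A)) :=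
    (h.comp (tendsto_atTop_add_const_right _ s tendsto_id)).const_mul _
  convert (hshift.sub h).div_const s using 1
  · ext l
    rw [← mul_assoc, ← Real.exp_add, show d * s + -d * (l + s) = -d * l by ring]
    ring
  · congr 1
    ring

theorem tendsto_exp_neg_mul_mul_of_subgradient (hR : ∀ l s, R l + s * N l ≤ R (l + s))
    (h : Tendsto (fun l => Real.exp (-d * l) * R l) atTop (𝓝 A)) :
    Tendsto (fun l => Real.exp (-d * l) * N l) atTop (𝓝 (d * A)) := by
  have hslope : Tendsto (fun s => (Real.exp (d * s) - 1) / s * A) (𝓝[≠] 0) (𝓝 (d * A)) :=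
    (tendsto_exp_mul_sub_one_div d).mul_const A
  refine tendsto_order.2 ⟨fun b hb => ?_, fun b hb => ?_⟩
  · obtain ⟨s, hsb, hs⟩ := ((hslope.mono_left (nhdsLT_le_nhdsNE 0)).eventually_const_lt hb
      |>.and self_mem_nhdsWithin).exists
    filter_upwards [(tendsto_exp_neg_mul_mul_slope h s).eventually_const_lt hsb] with l hl
    refine hl.trans_le (mul_le_mul_of_nonneg_left ?_ (Real.exp_pos _).le)
    rw [div_le_iff_of_neg hs]
    linarith [hR l s]
  · obtain ⟨s, hsb, hs⟩ := ((hslope.mono_left (nhdsGT_le_nhdsNE 0)).eventually_lt_const hb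
      |>.and self_mem_nhdsWithin).exists
    filter_upwards [(tendsto_exp_neg_mul_mul_slope h s).eventually_lt_const hsb] with l hl
    refine (mul_le_mul_of_nonneg_left ?_ (Real.exp_pos _).le).trans_lt hl
    rw [le_div_iff₀ hs]
    linarith [hR l s]

end Tauberian

theorem counting_asymptotics_of_riesz_general (lamSeq : ℕ → ℝ)
    (hlam : Tendsto lamSeq atTop atTop) (d A : ℝ)
    (h : Tendsto (fun l : ℝ => Real.exp (-d * l) * ∑' k, max (l - lamSeq k) 0)
      atTop (nhds A)) :
    Tendsto (fun l : ℝ => Real.exp (-d * l) * (Nat.card {k | lamSeq k < l} : ℝ))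
      atTop (nhds (d * A)) := by
  have hfin : ∀ l, {k | lamSeq k < l}.Finite := fun l =>
    (eventually_cofinite.1
      ((Nat.cofinite_eq_atTop ▸ hlam).eventually (eventually_ge_atTop l))).subset
      fun _ hk => not_le.2 hk
  exact tendsto_exp_neg_mul_mul_of_subgradient (tsum_max_sub_add_mul_natCard_le hfin) h

theorem counting_asymptotics_of_riesz (lamSeq : ℕ → ℝ)
    (hlam : Tendsto lamSeq atTop atTop) (d A : ℝ) (hd : 1 ≤ d) (hA : 0 < A)
    (h : Tendsto (fun l : ℝ => Real.exp (-d * l) * ∑' k, max (l - lamSeq k) 0)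
      atTop (nhds A)) :
    Tendsto (fun l : ℝ => Real.exp (-d * l) * (Nat.card {k | lamSeq k < l} : ℝ))
      atTop (nhds (d * A)) :=
  counting_asymptotics_of_riesz_general lamSeq hlam d A h
end
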